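/- In ℝ² with the Euclidean norm, let R_θ denote rotation about the origin by angle θ, acting as R_θ(u) = (cos θ·u₁ − sin θ·u₂, sin θ·u₁ + cos θ·u₂). Define p₁ := ( (√5 − √(4−√5))/4 , (√(5+2√5) − √(2+3/√5))/4 ), p₁' := (0, √((5+√5)/10)), q₁' := ( (1+√5)/8 , √(10 + 22/√5)/8 ), and for k ≥ 1 set p_k := R_{2π(k−1)/5}(p₁) and p_k' := R_{2π(k−1)/5}(p₁'). For vectors u, w ∈ ℝ² let [u w] be the 2×2 matrix with columns u and w, and define M₀ := (‖p₁'‖/‖p₁‖)·R_{π/5} (as a linear map), M₁ := [p₄'−p₃', p₁'−p₃'] · [p₁−p₂, p₁'−p₂]⁻¹, and M₂ := [p₅'−p₄', p₁'−p₄'] · [q₁'−p₁, p₁'−p₁]⁻¹. Then for every v ∈ ℝ² and each i ∈ {0,1,2}, ‖M_i · v‖ ≤ 3.40 · ‖v‖. -/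

import Mathlib

noncomputable section

open Real

/-- The rotation matrix about the origin by angle `θ`. -/
def rotMat (θ : ℝ) : Matrix (Fin 2) (Fin 2) ℝ :=
  !![cos θ, -sin θ; sin θ, cos θ]

/-- `colMat u v` is the 2×2 real matrix whose first column is `u` and
whose second column is `v`. -/
def colMat (u v : EuclideanSpace ℝ (Fin 2)) : Matrix (Fin 2) (Fin 2) ℝ :=
  Matrix.of fun i j => ![u, v] j i

/-- The point `p₁` of the partition of the regular unit pentagon. -/
def pPt (k : ℕ) : EuclideanSpace ℝ (Fin 2) :=
  Matrix.toEuclideanLin (rotMat (2 * π * ((k - 1 : ℕ) : ℝ) / 5))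
    (WithLp.toLp 2 ![(sqrt 5 - sqrt (4 - sqrt 5)) / 4,
      (sqrt (5 + 2 * sqrt 5) - sqrt (2 + 3 / sqrt 5)) / 4])

/-- The points `p₁', p₂', …` of the partition of the regular unit pentagon. -/
def pPt' (k : ℕ) : EuclideanSpace ℝ (Fin 2) :=
  Matrix.toEuclideanLin (rotMat (2 * π * ((k - 1 : ℕ) : ℝ) / 5))
    (WithLp.toLp 2 ![0, sqrt ((5 + sqrt 5) / 10)])

/-- The point `q₁'` of the partition of the regular unit pentagon. -/
def qPt' : EuclideanSpace ℝ (Fin 2) :=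
  WithLp.toLp 2 ![(1 + sqrt 5) / 8, sqrt (10 + 22 / sqrt 5) / 8]

/-- The matrix mapping the small blue pentagon onto the large blue pentagon. -/
def M0 : Matrix (Fin 2) (Fin 2) ℝ :=
  (‖pPt' 1‖ / ‖pPt 1‖) • rotMat (π / 5)

/-- The matrix mapping the small orange triangle onto the large orange triangle. -/
def M1 : Matrix (Fin 2) (Fin 2) ℝ :=
  colMat (pPt' 4 - pPt' 3) (pPt' 1 - pPt' 3) * (colMat (pPt 1 - pPt 2) (pPt' 1 - pPt 2))⁻¹

/-- The matrix mapping the small yellow triangle onto the large yellow triangle. -/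
def M2 : Matrix (Fin 2) (Fin 2) ℝ :=
  colMat (pPt' 5 - pPt' 4) (pPt' 1 - pPt' 4) * (colMat (qPt' - pPt 1) (pPt' 1 - pPt 1))⁻¹

/-! `M₀` is a rotation scaled by `‖p₁'‖ / ‖p₁‖ ≈ 2.20`. For `M = [a a'] [b b']⁻¹` the bound
`‖M v‖ ≤ K ‖v‖` amounts to `‖s a + t a'‖ ≤ K ‖s b + t b'‖` for all reals `s, t`, i.e. to
`K² G(b, b') - G(a, a')` being positive semidefinite, where `G` is the Gram matrix. For `M₁` and
`M₂` this 2×2 condition is certified with a rational margin from rational enclosures of the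
coordinates of the points, which in turn come from rational bounds on the nested radicals. -/

lemma quadratic_form_nonneg {P Q R : ℝ} (hP : 0 ≤ P) (hQ : 0 ≤ Q) (hPQ : R ^ 2 ≤ P * Q)
    (s t : ℝ) : 0 ≤ P * s ^ 2 + 2 * R * s * t + Q * t ^ 2 := by
  rcases hP.eq_or_lt with rfl | hP
  · obtain rfl : R = 0 := by nlinarith
    nlinarith
  · refine (mul_nonneg_iff_of_pos_left hP).1 ?_
    have h : P * (P * s ^ 2 + 2 * R * s * t + Q * t ^ 2)
        = (P * s + R * t) ^ 2 + (P * Q - R ^ 2) * t ^ 2 := by ring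
    rw [h]
    nlinarith [sq_nonneg (P * s + R * t), sq_nonneg t]

section Gram

variable {E F : Type*} [NormedAddCommGroup E] [InnerProductSpace ℝ E]
  [NormedAddCommGroup F] [InnerProductSpace ℝ F]

lemma norm_smul_add_smul_sq (a a' : E) (s t : ℝ) :
    ‖s • a + t • a'‖ ^ 2
      = s ^ 2 * ‖a‖ ^ 2 + 2 * s * t * inner ℝ a a' + t ^ 2 * ‖a'‖ ^ 2 := by
  rw [norm_add_sq_real, norm_smul, norm_smul, real_inner_smul_left, real_inner_smul_right,
    mul_pow, mul_pow, Real.norm_eq_abs, Real.norm_eq_abs, sq_abs, sq_abs]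
  ring

lemma norm_smul_add_smul_le_of_gram {a a' : E} {b b' : F} {K p q r : ℝ} (hK : 0 ≤ K)
    (hp : 0 ≤ p) (hq : 0 ≤ q) (hpq : r ^ 2 ≤ p * q)
    (hP : p ≤ K ^ 2 * ‖b‖ ^ 2 - ‖a‖ ^ 2) (hQ : q ≤ K ^ 2 * ‖b'‖ ^ 2 - ‖a'‖ ^ 2)
    (hR : |K ^ 2 * inner ℝ b b' - inner ℝ a a'| ≤ r) (s t : ℝ) :
    ‖s • a + t • a'‖ ≤ K * ‖s • b + t • b'‖ := by
  refine le_of_sq_le_sq ?_ (by positivity)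
  have hPQR : (K ^ 2 * inner ℝ b b' - inner ℝ a a') ^ 2
      ≤ (K ^ 2 * ‖b‖ ^ 2 - ‖a‖ ^ 2) * (K ^ 2 * ‖b'‖ ^ 2 - ‖a'‖ ^ 2) :=
    calc _ = |K ^ 2 * inner ℝ b b' - inner ℝ a a'| ^ 2 := (sq_abs _).symm
      _ ≤ r ^ 2 := pow_le_pow_left₀ (abs_nonneg _) hR 2
      _ ≤ p * q := hpq
      _ ≤ _ := mul_le_mul hP hQ hq (hp.trans hP)
  have := quadratic_form_nonneg (hp.trans hP) (hq.trans hQ) hPQR s t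
  rw [mul_pow, norm_smul_add_smul_sq, norm_smul_add_smul_sq]
  linear_combination this

end Gram

-- No invertibility hypothesis is needed: for singular `B`, Mathlib's `B⁻¹` is `0`.
lemma Matrix.norm_toEuclideanLin_mul_inv_le {n : Type*} [Fintype n] [DecidableEq n]
    {A B : Matrix n n ℝ} {K : ℝ} (hK : 0 ≤ K)
    (h : ∀ w, ‖toEuclideanLin A w‖ ≤ K * ‖toEuclideanLin B w‖)
    (v : EuclideanSpace ℝ n) :
    ‖toEuclideanLin (A * B⁻¹) v‖ ≤ K * ‖v‖ := by
  by_cases hB : IsUnit B.det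
  · simpa [← LinearMap.comp_apply, ← toLpLin_mul_same, mul_nonsing_inv _ hB]
      using h (toEuclideanLin B⁻¹ v)
  · simp [nonsing_inv_apply_not_isUnit _ hB]
    positivity

lemma EuclideanSpace.norm_sq_fin_two (x : EuclideanSpace ℝ (Fin 2)) :
    ‖x‖ ^ 2 = x 0 ^ 2 + x 1 ^ 2 := by
  simp [EuclideanSpace.real_norm_sq_eq, Fin.sum_univ_two]

lemma EuclideanSpace.inner_fin_two (x y : EuclideanSpace ℝ (Fin 2)) :
    inner ℝ x y = x 0 * y 0 + x 1 * y 1 := by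
  simp [PiLp.inner_apply, Fin.sum_univ_two, mul_comm]

lemma toEuclideanLin_colMat (u u' w : EuclideanSpace ℝ (Fin 2)) :
    Matrix.toEuclideanLin (colMat u u') w = w 0 • u + w 1 • u' := by
  ext i
  fin_cases i <;> simp [colMat, Matrix.toLpLin_apply] <;> ring

lemma toEuclideanLin_rotMat (θ : ℝ) (v : EuclideanSpace ℝ (Fin 2)) :
    Matrix.toEuclideanLin (rotMat θ) v
      = !₂[cos θ * v 0 - sin θ * v 1, sin θ * v 0 + cos θ * v 1] := by
  ext i
  fin_cases i <;>
    simp [rotMat, Matrix.toLpLin_apply, Matrix.vecHead, Matrix.vecTail, sub_eq_add_neg]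

lemma norm_toEuclideanLin_smul_rotMat (r θ : ℝ) (v : EuclideanSpace ℝ (Fin 2)) :
    ‖Matrix.toEuclideanLin (r • rotMat θ) v‖ = |r| * ‖v‖ := by
  rw [map_smul, LinearMap.smul_apply, norm_smul, Real.norm_eq_abs]
  congr 1
  refine (sq_eq_sq₀ (norm_nonneg _) (norm_nonneg _)).1 ?_
  rw [EuclideanSpace.norm_sq_fin_two, EuclideanSpace.norm_sq_fin_two, toEuclideanLin_rotMat]
  simp only [Matrix.cons_val_zero, Matrix.cons_val_one]
  linear_combination (v 0 ^ 2 + v 1 ^ 2) * sin_sq_add_cos_sq θ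

lemma cos_two_pi_div_five : cos (2 * π / 5) = (√5 - 1) / 4 := by
  rw [show 2 * π / 5 = 2 * (π / 5) by ring, cos_two_mul, cos_pi_div_five]
  linear_combination (1 / 8 : ℝ) * Real.sq_sqrt (show (0 : ℝ) ≤ 5 by norm_num)

lemma sin_pi_div_five : sin (π / 5) = √((5 - √5) / 8) := by
  rw [sin_eq_sqrt_one_sub_cos_sq (by positivity) (by linarith [pi_pos]), cos_pi_div_five]
  congr 1
  linear_combination (-1 / 16 : ℝ) * Real.sq_sqrt (show (0 : ℝ) ≤ 5 by norm_num)

lemma sin_two_pi_div_five : sin (2 * π / 5) = √((5 + √5) / 8) := by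
  rw [sin_eq_sqrt_one_sub_cos_sq (by positivity) (by linarith [pi_pos]), cos_two_pi_div_five]
  congr 1
  linear_combination (-1 / 16 : ℝ) * Real.sq_sqrt (show (0 : ℝ) ≤ 5 by norm_num)

lemma pPt_one :
    pPt 1 = !₂[(√5 - √(4 - √5)) / 4, (√(5 + 2 * √5) - √(2 + 3 / √5)) / 4] := by
  rw [pPt, toEuclideanLin_rotMat]
  simp

lemma pPt_two : pPt 2 = !₂[(√5 - 1) / 4 * pPt 1 0 - √((5 + √5) / 8) * pPt 1 1,
    √((5 + √5) / 8) * pPt 1 0 + (√5 - 1) / 4 * pPt 1 1] := by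
  rw [pPt, toEuclideanLin_rotMat, pPt_one]
  norm_num [cos_two_pi_div_five, sin_two_pi_div_five]

lemma pPt'_eq (k : ℕ) :
    pPt' k = !₂[-(sin (2 * π * ((k - 1 : ℕ) : ℝ) / 5) * √((5 + √5) / 10)),
      cos (2 * π * ((k - 1 : ℕ) : ℝ) / 5) * √((5 + √5) / 10)] := by
  rw [pPt', toEuclideanLin_rotMat]
  simp

lemma pPt'_one : pPt' 1 = !₂[0, √((5 + √5) / 10)] := by
  simp [pPt'_eq]

lemma pPt'_three : pPt' 3 = !₂[-(√((5 - √5) / 8) * √((5 + √5) / 10)),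
    -((1 + √5) / 4 * √((5 + √5) / 10))] := by
  rw [pPt'_eq, show 2 * π * ((3 - 1 : ℕ) : ℝ) / 5 = π - π / 5 by norm_num; ring, sin_pi_sub,
    cos_pi_sub, sin_pi_div_five, cos_pi_div_five]
  simp

lemma pPt'_four : pPt' 4 = !₂[√((5 - √5) / 8) * √((5 + √5) / 10),
    -((1 + √5) / 4 * √((5 + √5) / 10))] := by
  rw [pPt'_eq, show 2 * π * ((4 - 1 : ℕ) : ℝ) / 5 = π / 5 + π by norm_num; ring, sin_add_pi,
    cos_add_pi, sin_pi_div_five, cos_pi_div_five]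
  simp

lemma pPt'_five : pPt' 5 = !₂[√((5 + √5) / 8) * √((5 + √5) / 10),
    (√5 - 1) / 4 * √((5 + √5) / 10)] := by
  rw [pPt'_eq, show 2 * π * ((5 - 1 : ℕ) : ℝ) / 5 = -(2 * π / 5) + 2 * π by norm_num; ring,
    sin_add_two_pi, cos_add_two_pi, sin_neg, cos_neg, sin_two_pi_div_five, cos_two_pi_div_five]
  simp

lemma sqrt_bounds_of_sq_bounds {a lo hi : ℝ} (hhi : 0 ≤ hi)
    (h : lo ^ 2 ≤ a ∧ a ≤ hi ^ 2) :
    lo ≤ √a ∧ √a ≤ hi :=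
  ⟨Real.le_sqrt_of_sq_le h.1, (Real.sqrt_le_left hhi).2 h.2⟩

lemma sqrt_five_bounds : 2.2360679 ≤ √5 ∧ √5 ≤ 2.236068 :=
  sqrt_bounds_of_sq_bounds (by norm_num) (by norm_num)

lemma div_sqrt_five (a : ℝ) : a / √5 = a / 5 * √5 := by
  field_simp
  rw [Real.sq_sqrt (by norm_num)]

lemma radical_bounds :
    (1.328131 ≤ √(4 - √5) ∧ √(4 - √5) ≤ 1.3281311) ∧
    (3.0776835 ≤ √(5 + 2 * √5) ∧ √(5 + 2 * √5) ≤ 3.0776836) ∧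
    (1.8280155 ≤ √(2 + 3 / √5) ∧ √(2 + 3 / √5) ≤ 1.8280156) ∧
    (0.8506508 ≤ √((5 + √5) / 10) ∧ √((5 + √5) / 10) ≤ 0.8506509) ∧
    (4.4540654 ≤ √(10 + 22 / √5) ∧ √(10 + 22 / √5) ≤ 4.4540655) ∧
    (0.5877852 ≤ √((5 - √5) / 8) ∧ √((5 - √5) / 8) ≤ 0.5877853) ∧
    (0.9510565 ≤ √((5 + √5) / 8) ∧ √((5 + √5) / 8) ≤ 0.9510566) := by
  obtain ⟨h₁, h₂⟩ := sqrt_five_bounds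
  rw [div_sqrt_five, div_sqrt_five]
  refine ⟨?_, ?_, ?_, ?_, ?_, ?_, ?_⟩ <;>
    refine sqrt_bounds_of_sq_bounds (by norm_num) ⟨?_, ?_⟩ <;> norm_num <;> linarith

lemma pPt_one_bounds : (0.226983 ≤ pPt 1 0 ∧ pPt 1 0 ≤ 0.226985) ∧
    (0.312416 ≤ pPt 1 1 ∧ pPt 1 1 ≤ 0.312418) := by
  obtain ⟨⟨h₁, h₂⟩, ⟨h₃, h₄⟩, ⟨h₅, h₆⟩, -⟩ := radical_bounds
  obtain ⟨h₇, h₈⟩ := sqrt_five_bounds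
  simp only [pPt_one, PiLp.toLp_apply, Matrix.cons_val_zero, Matrix.cons_val_one]
  refine ⟨⟨?_, ?_⟩, ?_, ?_⟩ <;> linarith

lemma pPt_two_bounds : (-0.22699 ≤ pPt 2 0 ∧ pPt 2 0 ≤ -0.22698) ∧
    (0.31241 ≤ pPt 2 1 ∧ pPt 2 1 ≤ 0.31243) := by
  obtain ⟨-, -, -, -, -, -, ⟨h₁, h₂⟩⟩ := radical_bounds
  obtain ⟨h₃, h₄⟩ := sqrt_five_bounds
  obtain ⟨⟨h₅, h₆⟩, ⟨h₇, h₈⟩⟩ := pPt_one_bounds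
  rw [pPt_two]
  simp only [Matrix.cons_val_zero, Matrix.cons_val_one]
  refine ⟨⟨?_, ?_⟩, ?_, ?_⟩ <;> nlinarith

lemma pPt'_one_bounds : pPt' 1 0 = 0 ∧ (0.85064 ≤ pPt' 1 1 ∧ pPt' 1 1 ≤ 0.85066) := by
  obtain ⟨-, -, -, ⟨h₁, h₂⟩, -⟩ := radical_bounds
  simp only [pPt'_one, PiLp.toLp_apply, Matrix.cons_val_zero, Matrix.cons_val_one]
  exact ⟨trivial, by linarith, by linarith⟩

lemma pPt'_three_bounds : (-0.50001 ≤ pPt' 3 0 ∧ pPt' 3 0 ≤ -0.49999) ∧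
    (-0.6882 ≤ pPt' 3 1 ∧ pPt' 3 1 ≤ -0.68818) := by
  obtain ⟨-, -, -, ⟨h₁, h₂⟩, -, ⟨h₃, h₄⟩, -⟩ := radical_bounds
  obtain ⟨h₅, h₆⟩ := sqrt_five_bounds
  simp only [pPt'_three, PiLp.toLp_apply, Matrix.cons_val_zero, Matrix.cons_val_one]
  refine ⟨⟨?_, ?_⟩, ?_, ?_⟩ <;> nlinarith

lemma pPt'_four_bounds : (0.49999 ≤ pPt' 4 0 ∧ pPt' 4 0 ≤ 0.50001) ∧
    (-0.6882 ≤ pPt' 4 1 ∧ pPt' 4 1 ≤ -0.68818) := by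
  obtain ⟨-, -, -, ⟨h₁, h₂⟩, -, ⟨h₃, h₄⟩, -⟩ := radical_bounds
  obtain ⟨h₅, h₆⟩ := sqrt_five_bounds
  simp only [pPt'_four, PiLp.toLp_apply, Matrix.cons_val_zero, Matrix.cons_val_one]
  refine ⟨⟨?_, ?_⟩, ?_, ?_⟩ <;> nlinarith

lemma pPt'_five_bounds : (0.80901 ≤ pPt' 5 0 ∧ pPt' 5 0 ≤ 0.80902) ∧
    (0.26286 ≤ pPt' 5 1 ∧ pPt' 5 1 ≤ 0.26287) := by
  obtain ⟨-, -, -, ⟨h₁, h₂⟩, -, -, ⟨h₃, h₄⟩⟩ := radical_bounds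
  obtain ⟨h₅, h₆⟩ := sqrt_five_bounds
  simp only [pPt'_five, PiLp.toLp_apply, Matrix.cons_val_zero, Matrix.cons_val_one]
  refine ⟨⟨?_, ?_⟩, ?_, ?_⟩ <;> nlinarith

lemma qPt'_bounds : (0.4045 ≤ qPt' 0 ∧ qPt' 0 ≤ 0.40452) ∧
    (0.55675 ≤ qPt' 1 ∧ qPt' 1 ≤ 0.55677) := by
  obtain ⟨-, -, -, -, ⟨h₁, h₂⟩, -⟩ := radical_bounds
  obtain ⟨h₃, h₄⟩ := sqrt_five_bounds
  simp only [qPt', PiLp.toLp_apply, Matrix.cons_val_zero, Matrix.cons_val_one]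
  refine ⟨⟨?_, ?_⟩, ?_, ?_⟩ <;> linarith

lemma norm_toEuclideanLin_M0_le (v : EuclideanSpace ℝ (Fin 2)) :
    ‖Matrix.toEuclideanLin M0 v‖ ≤ 3.40 * ‖v‖ := by
  rw [M0, norm_toEuclideanLin_smul_rotMat, abs_div, abs_norm, abs_norm]
  gcongr
  obtain ⟨-, h₁, h₂⟩ := pPt_one_bounds
  obtain ⟨h₃, h₄, h₅⟩ := pPt'_one_bounds
  have hp : 0.3 ≤ ‖pPt 1‖ := by
    refine le_of_sq_le_sq ?_ (norm_nonneg _)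
    rw [EuclideanSpace.norm_sq_fin_two]; nlinarith
  rw [div_le_iff₀ (by linarith)]
  refine le_of_sq_le_sq ?_ (by positivity)
  rw [mul_pow, EuclideanSpace.norm_sq_fin_two, h₃]
  nlinarith

lemma norm_toEuclideanLin_M1_le (v : EuclideanSpace ℝ (Fin 2)) :
    ‖Matrix.toEuclideanLin M1 v‖ ≤ 3.40 * ‖v‖ := by
  refine Matrix.norm_toEuclideanLin_mul_inv_le (by norm_num) (fun w => ?_) v
  rw [toEuclideanLin_colMat, toEuclideanLin_colMat]
  obtain ⟨⟨h₁, h₂⟩, h₃, h₄⟩ := pPt_one_bounds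
  obtain ⟨⟨h₅, h₆⟩, h₇, h₈⟩ := pPt_two_bounds
  obtain ⟨h₉, h₁₀, h₁₁⟩ := pPt'_one_bounds
  obtain ⟨⟨h₁₂, h₁₃⟩, h₁₄, h₁₅⟩ := pPt'_three_bounds
  obtain ⟨⟨h₁₆, h₁₇⟩, h₁₈, h₁₉⟩ := pPt'_four_bounds
  refine norm_smul_add_smul_le_of_gram (p := 1.38) (q := 1.32) (r := 0.7) (by norm_num)
    (by norm_num) (by norm_num) (by norm_num) ?_ ?_ ?_ _ _ <;>
  simp only [EuclideanSpace.norm_sq_fin_two, EuclideanSpace.inner_fin_two, PiLp.sub_apply, h₉]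
  · nlinarith
  · nlinarith
  · rw [abs_le]; constructor <;> nlinarith

lemma norm_toEuclideanLin_M2_le (v : EuclideanSpace ℝ (Fin 2)) :
    ‖Matrix.toEuclideanLin M2 v‖ ≤ 3.40 * ‖v‖ := by
  refine Matrix.norm_toEuclideanLin_mul_inv_le (by norm_num) (fun w => ?_) v
  rw [toEuclideanLin_colMat, toEuclideanLin_colMat]
  obtain ⟨⟨h₁, h₂⟩, h₃, h₄⟩ := pPt_one_bounds
  obtain ⟨⟨h₅, h₆⟩, h₇, h₈⟩ := qPt'_bounds
  obtain ⟨h₉, h₁₀, h₁₁⟩ := pPt'_one_bounds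
  obtain ⟨⟨h₁₂, h₁₃⟩, h₁₄, h₁₅⟩ := pPt'_four_bounds
  obtain ⟨⟨h₁₆, h₁₇⟩, h₁₈, h₁₉⟩ := pPt'_five_bounds
  -- The tight case (`‖M₂‖ ≈ 3.394`): here `p * q - r ^ 2 ≈ 0.006`.
  refine norm_smul_add_smul_le_of_gram (p := 0.054) (q := 1.32) (r := 0.255) (by norm_num)
    (by norm_num) (by norm_num) (by norm_num) ?_ ?_ ?_ _ _ <;>
  simp only [EuclideanSpace.norm_sq_fin_two, EuclideanSpace.inner_fin_two, PiLp.sub_apply, h₉]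
  · nlinarith
  · nlinarith
  · rw [abs_le]; constructor <;> nlinarith

/-- The linear parts `M₀, M₁, M₂` of the affine substitution map on a tile all have
Euclidean operator norm at most `3.40`. -/
theorem substitution_matrices_norm_le :
    ∀ v : EuclideanSpace ℝ (Fin 2),
      ‖Matrix.toEuclideanLin M0 v‖ ≤ 3.40 * ‖v‖ ∧
      ‖Matrix.toEuclideanLin M1 v‖ ≤ 3.40 * ‖v‖ ∧
      ‖Matrix.toEuclideanLin M2 v‖ ≤ 3.40 * ‖v‖ :=
  fun v =>
    ⟨norm_toEuclideanLin_M0_le v, norm_toEuclideanLin_M1_le v, norm_toEuclideanLin_M2_le v⟩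

end
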